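/- arXiv:2401.00425 — 3 statements merged into one kernel-verified Lean document; each statement's English description precedes it below -/
import Mathlib

section
/- Let $(M, \Pi)$ be a Poisson manifold and define the Koszul–Schouten bracket on 1-forms by $[\eta, \eta']_{KS} = \mathcal{L}_{\Pi^\sharp(\eta)} \eta' - \mathcal{L}_{\Pi^\sharp(\eta')} \eta - \mathrm{d}(\Pi(\eta,\eta'))$. Then $(T^*M, [\cdot,\cdot]_{KS}, \Pi^\sharp)$ is a Lie algebroid; in particular the Koszul–Schouten bracket satisfies the Jacobi identity and the Leibniz rule $[\eta, f\eta']_{KS} = f[\eta,\eta']_{KS} + \Pi^\sharp(\eta)(f)\, \eta'$. -/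
open KaehlerDifferential

/-- For a Poisson manifold `(M, Π)` (modelled algebraically:
`S = C^∞(M)`, 1-forms are Kähler differentials, `Π^♯ : Ω¹ → 𝔛(M)` is an
`S`-linear map which is skew and whose induced bracket on functions
`{f,g} = Π^♯(df)(g)` satisfies the Jacobi identity, i.e. `[Π,Π]_SN = 0`),
the Koszul–Schouten bracket
`[η,η']_KS = L_{Π^♯η} η' - L_{Π^♯η'} η - d(Π(η,η'))`
makes `(T*M, [·,·]_KS, Π^♯)` a Lie algebroid: it is skew-symmetric,
satisfies the Jacobi identity and the Leibniz rule
`[η, f η']_KS = f [η,η']_KS + Π^♯(η)(f) η'`. -/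
theorem poisson_koszulSchouten_lieAlgebroid
    (S : Type*) [CommRing S] [Algebra ℝ S]
    (Psh : KaehlerDifferential ℝ S →ₗ[S] Derivation ℝ S S)
    (hskew : ∀ f g : S, Psh (D ℝ S f) g = - Psh (D ℝ S g) f)
    (hjacobi : ∀ f g h : S,
      Psh (D ℝ S f) (Psh (D ℝ S g) h) - Psh (D ℝ S g) (Psh (D ℝ S f) h)
        = Psh (D ℝ S (Psh (D ℝ S f) g)) h)
    -- the Lie derivative of 1-forms along vector fields
    (L : Derivation ℝ S S → KaehlerDifferential ℝ S → KaehlerDifferential ℝ S)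
    (hL_add : ∀ X ω ω', L X (ω + ω') = L X ω + L X ω')
    (hL_char : ∀ (X : Derivation ℝ S S) (g f : S),
      L X (g • D ℝ S f) = (X g) • D ℝ S f + g • D ℝ S (X f)) :
    -- the Koszul–Schouten bracket
    ∀ ks : KaehlerDifferential ℝ S → KaehlerDifferential ℝ S →
        KaehlerDifferential ℝ S,
      (∀ η η', ks η η' =
        L (Psh η) η' - L (Psh η') η
          - D ℝ S ((Psh η).liftKaehlerDifferential η')) →
      ((∀ η η', ks η η' = - ks η' η) ∧
       (∀ η η' η'', ks η (ks η' η'') = ks (ks η η') η'' + ks η' (ks η η'')) ∧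
       (∀ (f : S) (η η' : KaehlerDifferential ℝ S),
          ks η (f • η') = f • ks η η' + (Psh η f) • η')) := by
  intro ks hks
  have spanind : ∀ (p : KaehlerDifferential ℝ S → Prop),
      (∀ f, p (D ℝ S f)) → p 0 → (∀ x y, p x → p y → p (x + y)) →
      (∀ (a : S) x, p x → p (a • x)) → ∀ ω, p ω := by
    intro p hD h0 hadd hsmul ω
    have hmem : ω ∈ Submodule.span S (Set.range (D ℝ S)) := by
      rw [span_range_derivation]; trivial
    refine Submodule.span_induction ?_ h0 (fun x y _ _ hx hy => hadd x y hx hy)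
      (fun a x _ hx => hsmul a x hx) hmem
    rintro _ ⟨f, rfl⟩; exact hD f
  have LD : ∀ (X : Derivation ℝ S S) f, L X (D ℝ S f) = D ℝ S (X f) := by
    intro X f
    have := hL_char X 1 f
    simpa using this
  have L0 : ∀ X, L X (0 : KaehlerDifferential ℝ S) = 0 := by
    intro X
    have := hL_char X 0 0
    simpa using this
  have Lsmul : ∀ (X : Derivation ℝ S S) ω (g : S),
      L X (g • ω) = (X g) • ω + g • L X ω := by
    intro X
    refine spanind _ ?_ ?_ ?_ ?_
    · intro f g; rw [hL_char, LD]
    · intro g; simp [L0]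
    · intro x y hx hy g
      rw [smul_add, hL_add, hx, hy, hL_add]
      module
    · intro a x hx g
      rw [smul_smul, hx, X.leibniz, hx]
      match_scalars <;> (try simp only [smul_eq_mul]) <;> ring
  have LaddX : ∀ (X Y : Derivation ℝ S S) ω, L (X + Y) ω = L X ω + L Y ω := by
    intro X Y
    refine spanind _ ?_ ?_ ?_ ?_
    · intro f; rw [LD, LD, LD, Derivation.add_apply, map_add]
    · simp [L0]
    · intro x y hx hy; rw [hL_add, hx, hy, hL_add, hL_add]; abel
    · intro a x hx; rw [Lsmul, Lsmul, Lsmul, hx, Derivation.add_apply]; module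
  have LzeroX : ∀ ω, L (0 : Derivation ℝ S S) ω = 0 := by
    refine spanind _ ?_ ?_ ?_ ?_
    · intro f; rw [LD]; simp
    · exact L0 0
    · intro x y hx hy; rw [hL_add, hx, hy, add_zero]
    · intro a x hx; rw [Lsmul, hx]; simp
  have LnegX : ∀ (X : Derivation ℝ S S) ω, L (-X) ω = - L X ω := by
    intro X ω
    have h := LaddX X (-X) ω
    rw [add_neg_cancel, LzeroX] at h
    exact (neg_eq_of_add_eq_zero_right h.symm).symm
  have lift_zero : ∀ ω, (0 : Derivation ℝ S S).liftKaehlerDifferential ω = 0 := by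
    refine spanind _ ?_ ?_ ?_ ?_
    · intro f; simp
    · simp
    · intro x y hx hy; rw [map_add, hx, hy, add_zero]
    · intro a x hx; rw [map_smul, hx, smul_zero]
  have lift_linear : ∀ (X Y : Derivation ℝ S S) (a : S) ω,
      (a • X + Y).liftKaehlerDifferential ω
        = a * X.liftKaehlerDifferential ω + Y.liftKaehlerDifferential ω := by
    intro X Y a
    refine spanind _ ?_ ?_ ?_ ?_
    · intro f; simp [Derivation.add_apply, Derivation.smul_apply, smul_eq_mul]
    · simp
    · intro x y hx hy; rw [map_add, map_add, map_add, hx, hy]; ring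
    · intro g x hx; rw [map_smul, map_smul, map_smul, hx, smul_eq_mul, smul_eq_mul, smul_eq_mul]; ring
  have lift_add : ∀ (X Y : Derivation ℝ S S) ω,
      (X + Y).liftKaehlerDifferential ω
        = X.liftKaehlerDifferential ω + Y.liftKaehlerDifferential ω := by
    intro X Y ω
    have := lift_linear X Y 1 ω
    simpa using this
  have lift_smul : ∀ (a : S) (X : Derivation ℝ S S) ω,
      (a • X).liftKaehlerDifferential ω = a * X.liftKaehlerDifferential ω := by
    intro a X ω
    have := lift_linear X 0 a ω
    simpa [lift_zero] using this
  have LsmulX : ∀ (f : S) (X : Derivation ℝ S S) ω,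
      L (f • X) ω = f • L X ω + (X.liftKaehlerDifferential ω) • D ℝ S f := by
    intro f X
    refine spanind _ ?_ ?_ ?_ ?_
    · intro h
      rw [LD, Derivation.smul_apply, smul_eq_mul, (D ℝ S).leibniz, LD,
        Derivation.liftKaehlerDifferential_comp_D]
    · simp [L0, lift_zero]
    · intro x y hx hy; rw [hL_add, hx, hy, hL_add, map_add]; module
    · intro a x hx
      rw [Lsmul, hx, Lsmul, map_smul, smul_eq_mul, Derivation.smul_apply, smul_eq_mul]
      module
  have Bskew : ∀ η η' : KaehlerDifferential ℝ S,
      (Psh η).liftKaehlerDifferential η' = - (Psh η').liftKaehlerDifferential η := by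
    refine spanind (fun η => ∀ η', (Psh η).liftKaehlerDifferential η'
        = - (Psh η').liftKaehlerDifferential η) ?_ ?_ ?_ ?_
    · intro f
      refine spanind _ ?_ ?_ ?_ ?_
      · intro g
        rw [Derivation.liftKaehlerDifferential_comp_D, Derivation.liftKaehlerDifferential_comp_D]
        exact hskew f g
      · simp [lift_zero]
      · intro x y hx hy
        rw [map_add, hx, hy, map_add Psh, lift_add]
        abel
      · intro a x hx
        rw [map_smul, hx, map_smul Psh, lift_smul, smul_eq_mul]
        ring
    · intro η'; simp [lift_zero]
    · intro x y hx hy η'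
      rw [map_add Psh, lift_add, hx, hy, map_add]
      abel
    · intro a x hx η'
      rw [map_smul Psh, lift_smul, hx, map_smul, smul_eq_mul]
      ring
  have ks0r : ∀ η, ks η 0 = 0 := by
    intro η
    rw [hks, L0, map_zero Psh, LzeroX, map_zero, map_zero]
    abel
  have ks_skew : ∀ η η', ks η η' = - ks η' η := by
    intro η η'
    rw [hks, hks, Bskew η' η, map_neg]
    abel
  have ks_addr : ∀ η x y, ks η (x + y) = ks η x + ks η y := by
    intro η x y
    rw [hks, hks, hks, hL_add, map_add Psh, LaddX, map_add, map_add]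
    abel
  have ks_addl : ∀ x y η, ks (x + y) η = ks x η + ks y η := by
    intro x y η
    rw [hks, hks, hks, map_add Psh, LaddX, hL_add, lift_add, map_add]
    abel
  have ks_smulr : ∀ (f : S) η η', ks η (f • η') = f • ks η η' + (Psh η f) • η' := by
    intro f η η'
    rw [hks, hks, Lsmul, map_smul Psh, LsmulX, map_smul, smul_eq_mul,
      (D ℝ S).leibniz, Bskew η' η]
    module
  have ks_smull : ∀ (f : S) η η', ks (f • η) η' = f • ks η η' - (Psh η' f) • η := by
    intro f η η'
    rw [ks_skew (f • η) η', ks_smulr, ks_skew η' η]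
    module
  have ks_negr : ∀ η x, ks η (-x) = - ks η x := by
    intro η x
    have h := ks_addr η x (-x)
    rw [add_neg_cancel, ks0r] at h
    exact (neg_eq_of_add_eq_zero_right h.symm).symm
  have ks_subr : ∀ η x y, ks η (x - y) = ks η x - ks η y := by
    intro η x y
    rw [sub_eq_add_neg, ks_addr, ks_negr, sub_eq_add_neg]
  have ks0l : ∀ η, ks 0 η = 0 := by
    intro η; rw [ks_skew, ks0r, neg_zero]
  have ksDD : ∀ f g, ks (D ℝ S f) (D ℝ S g) = D ℝ S (Psh (D ℝ S f) g) := by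
    intro f g
    rw [hks, LD, LD, Derivation.liftKaehlerDifferential_comp_D, hskew g f, map_neg]
    abel
  have ks_negl : ∀ x η, ks (-x) η = - ks x η := by
    intro x η
    have h := ks_addl x (-x) η
    rw [add_neg_cancel, ks0l] at h
    exact (neg_eq_of_add_eq_zero_right h.symm).symm
  have ks_subl : ∀ x y η, ks (x - y) η = ks x η - ks y η := by
    intro x y η
    rw [sub_eq_add_neg, ks_addl, ks_negl, sub_eq_add_neg]
  have anchor : ∀ η η' (a : S),
      Psh (ks η η') a = Psh η (Psh η' a) - Psh η' (Psh η a) := by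
    refine spanind (fun η => ∀ η' (a : S),
        Psh (ks η η') a = Psh η (Psh η' a) - Psh η' (Psh η a)) ?_ ?_ ?_ ?_
    · intro f
      refine spanind (fun η' => ∀ a : S,
          Psh (ks (D ℝ S f) η') a
            = Psh (D ℝ S f) (Psh η' a) - Psh η' (Psh (D ℝ S f) a)) ?_ ?_ ?_ ?_
      · intro g a
        rw [ksDD]
        exact (hjacobi f g a).symm
      · intro a; rw [ks0r, map_zero Psh]; simp
      · intro x y hx hy a
        simp only [ks_addr, map_add, Derivation.add_apply, hx, hy]
        ring
      · intro b x hx a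
        simp only [ks_smulr, map_add, map_smul, Derivation.add_apply,
          Derivation.smul_apply, Derivation.leibniz, smul_eq_mul, hx]
        ring
    · intro η' a; rw [ks0l, map_zero Psh]; simp
    · intro x y hx hy η' a
      simp only [ks_addl, map_add, Derivation.add_apply, hx, hy]
      ring
    · intro b x hx η' a
      simp only [ks_smull, map_sub, map_smul, Derivation.sub_apply,
        Derivation.smul_apply, Derivation.leibniz, smul_eq_mul, hx]
      ring
  have jac : ∀ η η' ω, ks η (ks η' ω) = ks (ks η η') ω + ks η' (ks η ω) := by
    refine spanind (fun η => ∀ η' ω,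
        ks η (ks η' ω) = ks (ks η η') ω + ks η' (ks η ω)) ?_ ?_ ?_ ?_
    · intro f
      refine spanind (fun η' => ∀ ω,
          ks (D ℝ S f) (ks η' ω)
            = ks (ks (D ℝ S f) η') ω + ks η' (ks (D ℝ S f) ω)) ?_ ?_ ?_ ?_
      · intro g
        refine spanind _ ?_ ?_ ?_ ?_
        · intro h
          rw [ksDD g h, ksDD f (Psh (D ℝ S g) h), ksDD f g,
            ksDD (Psh (D ℝ S f) g) h, ksDD f h, ksDD g (Psh (D ℝ S f) h),
            ← map_add]
          congr 1
          linear_combination hjacobi f g h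
        · simp [ks0r]
        · intro x y hx hy
          simp only [ks_addr, hx, hy]
          abel
        · intro a ω hω
          simp only [ks_smulr, ks_addr, hω, anchor]
          module
      · intro ω; simp [ks0l, ks0r]
      · intro x y hx hy ω
        simp only [ks_addl, ks_addr, hx, hy]
        abel
      · intro a μ hμ ω
        simp only [ks_smull, ks_smulr, ks_subr, ks_addl, ks_addr, hμ, anchor]
        module
    · intro η' ω; simp [ks0l, ks0r]
    · intro x y hx hy η' ω
      simp only [ks_addl, ks_addr, hx, hy]
      abel
    · intro a ν hν η' ω
      simp only [ks_smull, ks_subl, ks_smulr, ks_subr, ks_addl, ks_addr, hν, anchor]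
      rw [ks_skew ν η']
      module
  exact ⟨ks_skew, jac, ks_smulr⟩
end

section
/- Let $E$ be a Courant algebroid with Dorfman bracket $\circ$, anchor $\rho$, and pairing $\langle\cdot,\cdot\rangle$, and let $\nabla^E$ be an $E$-connection on $E$ compatible with the pairing ($\rho(e)\langle e_1, e_2\rangle = \langle\nabla^E_e e_1, e_2\rangle + \langle e_1, \nabla^E_e e_2\rangle$). Then the Gualtieri torsion $\mathcal{T}^E(e_1,e_2,e_3) = \langle \nabla^E_{e_1} e_2 - \nabla^E_{e_2} e_1 - [e_1,e_2]_E, e_3\rangle + \frac{1}{2}\left(\langle \nabla^E_{e_3} e_1, e_2\rangle - \langle \nabla^E_{e_3} e_2, e_1\rangle\right)$, where $[e_1,e_2]_E = \frac{1}{2}(e_1 \circ e_2 - e_2 \circ e_1)$, is $C^\infty(M)$-linear in each of its three arguments, i.e. a tensor $\mathcal{T}^E \in \Gamma(\wedge^3 E^*)$. -/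
/-- For a Courant algebroid `E` (pre-Courant axioms plus the
Leibniz/Jacobi identity for the Dorfman bracket `∘`) with an `E`-connection
compatible with the pairing, the Gualtieri torsion
`𝒯(e₁,e₂,e₃) = ⟨∇_{e₁}e₂ - ∇_{e₂}e₁ - [e₁,e₂], e₃⟩
  + ½(⟨∇_{e₃}e₁, e₂⟩ - ⟨∇_{e₃}e₂, e₁⟩)`,
with `[e₁,e₂] = ½(e₁∘e₂ - e₂∘e₁)`, is `C^∞(M)`-linear in each of its three
arguments (i.e. it is a tensor). -/
theorem gualtieri_torsion_tensorial
    (R E : Type*) [CommRing R] [Algebra ℝ R]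
    [AddCommGroup E] [Module R E] [Module ℝ E] [IsScalarTower ℝ R E]
    (pair : E →ₗ[R] E →ₗ[R] R)
    (hpair_symm : ∀ e e' : E, pair e e' = pair e' e)
    (hnondeg : ∀ e : E, (∀ e' : E, pair e e' = 0) → e = 0)
    (ρ : E →ₗ[R] Derivation ℝ R R)
    (circ : E → E → E)
    (hcirc_add_left : ∀ e₁ e₂ e' : E, circ (e₁ + e₂) e' = circ e₁ e' + circ e₂ e')
    (hcirc_add_right : ∀ e e₁ e₂ : E, circ e (e₁ + e₂) = circ e e₁ + circ e e₂)
    (ax1 : ∀ e e' : E, ρ (circ e e') = ⁅ρ e, ρ e'⁆)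
    (ax2 : ∀ e e' : E, pair (circ e e) e' = (1/2 : ℝ) • (ρ e' (pair e e)))
    (ax3 : ∀ e e' e'' : E,
      ρ e (pair e' e'') = pair (circ e e') e'' + pair e' (circ e e''))
    (hjacobi : ∀ e e' e'' : E,
      circ e (circ e' e'') = circ (circ e e') e'' + circ e' (circ e e''))
    (conn : E → E → E)
    (hconn_add_left : ∀ e₁ e₂ e' : E, conn (e₁ + e₂) e' = conn e₁ e' + conn e₂ e')
    (hconn_add_right : ∀ e e₁ e₂ : E, conn e (e₁ + e₂) = conn e e₁ + conn e e₂)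
    (hconn_smul_left : ∀ (f : R) (e e' : E), conn (f • e) e' = f • conn e e')
    (hconn_leibniz : ∀ (f : R) (e e' : E),
      conn e (f • e') = f • conn e e' + (ρ e f) • e')
    (hconn_compat : ∀ e e₁ e₂ : E,
      ρ e (pair e₁ e₂) = pair (conn e e₁) e₂ + pair e₁ (conn e e₂)) :
    -- the Gualtieri torsion
    ∀ 𝒯 : E → E → E → R,
      (∀ e₁ e₂ e₃ : E,
        𝒯 e₁ e₂ e₃ =
          pair (conn e₁ e₂ - conn e₂ e₁
                  - (1/2 : ℝ) • (circ e₁ e₂ - circ e₂ e₁)) e₃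
            + (1/2 : ℝ) • (pair (conn e₃ e₁) e₂ - pair (conn e₃ e₂) e₁)) →
      ((∀ (f : R) (e₁ e₂ e₃ : E), 𝒯 (f • e₁) e₂ e₃ = f * 𝒯 e₁ e₂ e₃) ∧
       (∀ (f : R) (e₁ e₂ e₃ : E), 𝒯 e₁ (f • e₂) e₃ = f * 𝒯 e₁ e₂ e₃) ∧
       (∀ (f : R) (e₁ e₂ e₃ : E), 𝒯 e₁ e₂ (f • e₃) = f * 𝒯 e₁ e₂ e₃) ∧
       (∀ e e₁ e₂ e₃ : E, 𝒯 (e + e₁) e₂ e₃ = 𝒯 e e₂ e₃ + 𝒯 e₁ e₂ e₃) ∧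
       (∀ e e₁ e₂ e₃ : E, 𝒯 e₁ (e + e₂) e₃ = 𝒯 e₁ e e₃ + 𝒯 e₁ e₂ e₃) ∧
       (∀ e e₁ e₂ e₃ : E, 𝒯 e₁ e₂ (e + e₃) = 𝒯 e₁ e₂ e + 𝒯 e₁ e₂ e₃)) := by
  intro 𝒯 h𝒯
  set c : R := algebraMap ℝ R (1/2) with hc
  have hcR : ∀ a : R, (1/2 : ℝ) • a = c * a := fun a => Algebra.smul_def _ _
  have hcE : ∀ v : E, (1/2 : ℝ) • v = c • v := fun v =>
    (algebraMap_smul R (1/2 : ℝ) v).symm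
  have hc2 : c + c = 1 := by rw [hc, ← map_add]; norm_num
  have hder : ∀ (e : E) (a b : R), ρ e (a * b) = a * ρ e b + b * ρ e a := by
    intro e a b; simpa [smul_eq_mul] using (ρ e).leibniz a b
  -- expanded form of the torsion
  have P𝒯 : ∀ e₁ e₂ e₃ : E, 𝒯 e₁ e₂ e₃ =
      pair (conn e₁ e₂) e₃ - pair (conn e₂ e₁) e₃
        - c * pair (circ e₁ e₂) e₃ + c * pair (circ e₂ e₁) e₃
        + c * pair (conn e₃ e₁) e₂ - c * pair (conn e₃ e₂) e₁ := by
    intro e₁ e₂ e₃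
    rw [h𝒯]
    simp only [hcE, hcR, map_sub, map_smul, LinearMap.sub_apply,
      LinearMap.smul_apply, smul_eq_mul]
    ring
  -- symmetrized bracket identity (polarization of ax2)
  have Lsym : ∀ e e' y : E,
      pair (circ e e') y + pair (circ e' e) y = ρ y (pair e e') := by
    intro e e' y
    have h := ax2 (e + e') y
    have he := ax2 e y
    have he' := ax2 e' y
    rw [hcirc_add_left, hcirc_add_right, hcirc_add_right] at h
    simp only [map_add, LinearMap.add_apply, hcR, hpair_symm e' e] at h he he'
    linear_combination h - he - he' + (ρ y (pair e e')) * hc2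
  -- Leibniz rule in the second slot of circ (at the pairing level)
  have Lright : ∀ (f : R) (e e' y : E),
      pair (circ e (f • e')) y = f * pair (circ e e') y + ρ e f * pair e' y := by
    intro f e e' y
    have h1 := ax3 e (f • e') y
    have h2 := ax3 e e' y
    simp only [map_smul, LinearMap.smul_apply, smul_eq_mul] at h1
    rw [hder] at h1
    linear_combination f * h2 - h1
  -- Leibniz rule in the first slot of circ (at the pairing level)
  have Lleft : ∀ (f : R) (e e' y : E),
      pair (circ (f • e) e') y
        = f * pair (circ e e') y - ρ e' f * pair e y + pair e e' * ρ y f := by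
    intro f e e' y
    have L := Lsym (f • e) e' y
    simp only [map_smul, LinearMap.smul_apply, smul_eq_mul] at L
    rw [hder] at L
    linear_combination L - Lright f e' e y - f * Lsym e e' y
  -- connection at the pairing level
  have connL : ∀ (f : R) (e e' y : E),
      pair (conn (f • e) e') y = f * pair (conn e e') y := by
    intro f e e' y
    rw [hconn_smul_left, map_smul, LinearMap.smul_apply, smul_eq_mul]
  have connR : ∀ (f : R) (e e' y : E),
      pair (conn e (f • e')) y = f * pair (conn e e') y + ρ e f * pair e' y := by
    intro f e e' y
    rw [hconn_leibniz, map_add, LinearMap.add_apply, map_smul, map_smul,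
      LinearMap.smul_apply, LinearMap.smul_apply, smul_eq_mul, smul_eq_mul]
  have pairR : ∀ (f : R) (x y : E), pair x (f • y) = f * pair x y := by
    intro f x y; rw [map_smul, smul_eq_mul]
  -- linearity in the first argument
  have slot1 : ∀ (f : R) (e₁ e₂ e₃ : E), 𝒯 (f • e₁) e₂ e₃ = f * 𝒯 e₁ e₂ e₃ := by
    intro f e₁ e₂ e₃
    rw [P𝒯, P𝒯, connL, connR, Lleft, Lright, connR, pairR]
    linear_combination (ρ e₂ f * pair e₁ e₃) * hc2
  -- antisymmetry in the first two arguments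
  have hanti : ∀ e₁ e₂ e₃ : E, 𝒯 e₁ e₂ e₃ = -𝒯 e₂ e₁ e₃ := by
    intro e₁ e₂ e₃
    linear_combination P𝒯 e₁ e₂ e₃ + P𝒯 e₂ e₁ e₃
  refine ⟨slot1, ?_, ?_, ?_, ?_, ?_⟩
  · intro f e₁ e₂ e₃
    rw [hanti, slot1, hanti e₁ e₂ e₃]; ring
  · intro f e₁ e₂ e₃
    rw [P𝒯, P𝒯]
    simp only [connL, pairR]
    ring
  · intro e e₁ e₂ e₃
    simp only [P𝒯, hconn_add_left, hconn_add_right, hcirc_add_left,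
      hcirc_add_right, map_add, LinearMap.add_apply]
    ring
  · intro e e₁ e₂ e₃
    simp only [P𝒯, hconn_add_left, hconn_add_right, hcirc_add_left,
      hcirc_add_right, map_add, LinearMap.add_apply]
    ring
  · intro e e₁ e₂ e₃
    simp only [P𝒯, hconn_add_left, hconn_add_right, hcirc_add_left,
      hcirc_add_right, map_add, LinearMap.add_apply]
    ring
end

section
/- Let $S_{cl}$ be the classical action of the 4-form twisted Courant sigma model on a closed 3-manifold $\Sigma$. If the 4-form is exact, $H = \mathrm{d}G$ for a 3-form $G$ on $M$, then the action can be rewritten as an untwisted Courant sigma model via the field redefinitions $\tilde{B}_\mu = B_\mu - \frac{1}{3!}G_{\mu\nu\sigma}F^\nu F^\sigma + \frac{1}{2}G_{\mu\nu\sigma}\rho_a{}^\sigma A^a F^\nu - \frac{1}{2}G_{\mu\nu\sigma}\rho_a{}^\nu\rho_b{}^\sigma A^a A^b$ and $\tilde{C}_{abc} = C_{abc} + \rho_a{}^\mu\rho_b{}^\nu\rho_c{}^\sigma G_{\mu\nu\sigma}$, where $F^\mu = \mathrm{d}X^\mu - \rho_a{}^\mu A^a$; i.e. the Wess–Zumino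 term $\int_{\hat\Sigma} X^*\mathrm{d}G$ equals the difference of the untwisted actions with the redefined and original fields. -/
open scoped BigOperators

namespace Stmt15

variable {m n : ℕ} {A : Type*} [Ring A] [Algebra ℝ A]

/-- The (pointwise, coefficientwise) Lagrangian 3-form of the untwisted
Courant sigma model:
`-B'_μ dX^μ + ½ η_{ab} A^a dA^b + ρ_a{}^μ B'_μ A^a + (1/3!) C'_{abc} A^a A^b A^c`. -/
noncomputable def Lag (η : Fin n → Fin n → ℝ)
    (ρ : Fin n → Fin m → ℝ) (C' : Fin n → Fin n → Fin n → ℝ)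
    (dX : Fin m → A) (Af dA : Fin n → A) (B' : Fin m → A) : A :=
  (∑ μ, -(B' μ * dX μ))
    + (1/2 : ℝ) • (∑ a, ∑ b, (η a b) • (Af a * dA b))
    + (∑ a, ∑ μ, (ρ a μ) • (B' μ * Af a))
    + (1/6 : ℝ) • (∑ a, ∑ b, ∑ c, (C' a b c) • (Af a * Af b * Af c))

end Stmt15

open Stmt15

section Aux15
variable {A : Type*} [Ring A] [Algebra ℝ A] {τ : Type*} [Fintype τ]

private lemma sum3_rot {M : Type*} [AddCommMonoid M] (f : τ → τ → τ → M) :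
    ∑ a, ∑ b, ∑ c, f a b c = ∑ b, ∑ c, ∑ a, f a b c := by
  rw [Finset.sum_comm]
  exact Finset.sum_congr rfl fun b _ => Finset.sum_comm

private lemma sum3_rev {M : Type*} [AddCommMonoid M] (f : τ → τ → τ → M) :
    ∑ a, ∑ b, ∑ c, f a b c = ∑ c, ∑ b, ∑ a, f a b c := by
  rw [sum3_rot, sum3_rot (f := fun b c a => f a b c)]
  exact Finset.sum_congr rfl fun c _ => Finset.sum_comm

private lemma sum3_eq_prod {M : Type*} [AddCommMonoid M] (g : τ → τ → τ → M) :
    ∑ a, ∑ b, ∑ c, g a b c = ∑ p : τ × τ × τ, g p.1 p.2.1 p.2.2 := by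
  rw [Fintype.sum_prod_type]
  exact Finset.sum_congr rfl fun a _ => by rw [Fintype.sum_prod_type]

private lemma sum_swap33 {β M : Type*} [Fintype β] [AddCommMonoid M]
    (f : τ → τ → τ → β → β → β → M) :
    ∑ a, ∑ b, ∑ c, ∑ x, ∑ y, ∑ z, f a b c x y z
      = ∑ x, ∑ y, ∑ z, ∑ a, ∑ b, ∑ c, f a b c x y z := by
  calc ∑ a, ∑ b, ∑ c, ∑ x, ∑ y, ∑ z, f a b c x y z
      = ∑ p : τ × τ × τ, ∑ x, ∑ y, ∑ z, f p.1 p.2.1 p.2.2 x y z :=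
        sum3_eq_prod _
    _ = ∑ p : τ × τ × τ, ∑ q : β × β × β,
          f p.1 p.2.1 p.2.2 q.1 q.2.1 q.2.2 :=
        Finset.sum_congr rfl fun p _ => sum3_eq_prod _
    _ = ∑ q : β × β × β, ∑ p : τ × τ × τ,
          f p.1 p.2.1 p.2.2 q.1 q.2.1 q.2.2 := Finset.sum_comm
    _ = ∑ x, ∑ y, ∑ z, ∑ p : τ × τ × τ, f p.1 p.2.1 p.2.2 x y z :=
        (sum3_eq_prod
          (fun x y z => ∑ p : τ × τ × τ, f p.1 p.2.1 p.2.2 x y z)).symm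
    _ = ∑ x, ∑ y, ∑ z, ∑ a, ∑ b, ∑ c, f a b c x y z :=
        Finset.sum_congr rfl fun x _ => Finset.sum_congr rfl fun y _ =>
          Finset.sum_congr rfl fun z _ =>
            (sum3_eq_prod (fun a b c => f a b c x y z)).symm

noncomputable def S3 (g : τ → τ → τ → ℝ) (x y z : τ → A) : A :=
  ∑ μ, ∑ ν, ∑ σ, g μ ν σ • (x μ * y ν * z σ)

private lemma S3_swap12 (g : τ → τ → τ → ℝ) (x y z : τ → A)
    (hg : ∀ a b c, g a b c = - g b a c)
    (hxy : ∀ a b, x a * y b = -(y b * x a)) :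
    S3 g x y z = S3 g y x z := by
  unfold S3
  rw [Finset.sum_comm]
  refine Finset.sum_congr rfl fun ν _ => Finset.sum_congr rfl fun μ _ =>
    Finset.sum_congr rfl fun σ _ => ?_
  rw [hg, hxy]
  simp [neg_mul, mul_assoc]

private lemma S3_swap23 (g : τ → τ → τ → ℝ) (x y z : τ → A)
    (hg : ∀ a b c, g a b c = - g a c b)
    (hyz : ∀ a b, y a * z b = -(z b * y a)) :
    S3 g x y z = S3 g x z y := by
  unfold S3
  refine Finset.sum_congr rfl fun μ _ => ?_
  rw [Finset.sum_comm]
  refine Finset.sum_congr rfl fun σ _ => Finset.sum_congr rfl fun ν _ => ?_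
  rw [hg, mul_assoc, hyz]
  simp [mul_assoc]

private lemma S3_neg (g : τ → τ → τ → ℝ) (x y z : τ → A) :
    S3 (fun a b c => -g a b c) x y z = - S3 g x y z := by
  simp [S3, neg_smul, Finset.sum_neg_distrib]

private lemma S3_sub1 (g : τ → τ → τ → ℝ) (x x' y z : τ → A) :
    S3 g (fun μ => x μ - x' μ) y z = S3 g x y z - S3 g x' y z := by
  simp [S3, sub_mul, smul_sub, Finset.sum_sub_distrib]

private lemma S3_sub2 (g : τ → τ → τ → ℝ) (x y y' z : τ → A) :
    S3 g x (fun μ => y μ - y' μ) z = S3 g x y z - S3 g x y' z := by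
  simp [S3, sub_mul, mul_sub, smul_sub, Finset.sum_sub_distrib]

private lemma S3_sub3 (g : τ → τ → τ → ℝ) (x y z z' : τ → A) :
    S3 g x y (fun μ => z μ - z' μ) = S3 g x y z - S3 g x y z' := by
  simp [S3, mul_sub, smul_sub, Finset.sum_sub_distrib]

private lemma main_core (G : τ → τ → τ → ℝ)
    (hG12 : ∀ a b c, G a b c = - G b a c)
    (hG23 : ∀ a b c, G a b c = - G a c b)
    (X R F : τ → A) (hF : ∀ μ, F μ = X μ - R μ)
    (hXX : ∀ μ ν, X μ * X ν = -(X ν * X μ))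
    (hXR : ∀ μ ν, X μ * R ν = -(R ν * X μ))
    (hRR : ∀ μ ν, R μ * R ν = -(R ν * R μ)) :
    (1/6 : ℝ) • S3 G X X X
      = (∑ μ, -((-( (1/6:ℝ) • (∑ ν, ∑ σ, G μ ν σ • (F ν * F σ)))
            + (1/2:ℝ) • (∑ ν, ∑ σ, G μ ν σ • (R σ * F ν))
            - (1/2:ℝ) • (∑ ν, ∑ σ, G μ ν σ • (R ν * R σ))) * X μ))
        + (∑ μ, ((-( (1/6:ℝ) • (∑ ν, ∑ σ, G μ ν σ • (F ν * F σ)))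
            + (1/2:ℝ) • (∑ ν, ∑ σ, G μ ν σ • (R σ * F ν))
            - (1/2:ℝ) • (∑ ν, ∑ σ, G μ ν σ • (R ν * R σ))) * R μ))
        + (1/6 : ℝ) • S3 G R R R := by
  have hRX : ∀ μ ν, R μ * X ν = -(X ν * R μ) := fun μ ν => by
    rw [hXR ν μ, neg_neg]
  have hFeq : F = fun μ => X μ - R μ := funext hF
  set ΔB : τ → A := fun μ =>
      (-( (1/6:ℝ) • (∑ ν, ∑ σ, G μ ν σ • (F ν * F σ)))
        + (1/2:ℝ) • (∑ ν, ∑ σ, G μ ν σ • (R σ * F ν))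
        - (1/2:ℝ) • (∑ ν, ∑ σ, G μ ν σ • (R ν * R σ))) with hΔB
  have hcomb : (∑ μ, -(ΔB μ * X μ)) + (∑ μ, ΔB μ * R μ)
      = -(∑ μ, ΔB μ * F μ) := by
    rw [← Finset.sum_add_distrib, ← Finset.sum_neg_distrib]
    refine Finset.sum_congr rfl fun μ _ => ?_
    rw [hF, mul_sub]; abel
  rw [hcomb]
  have hexp : ∑ μ, ΔB μ * F μ
      = (-(1/6:ℝ)) • (∑ μ, ∑ ν, ∑ σ, G μ ν σ • (F ν * F σ * F μ))
        + (1/2:ℝ) • (∑ μ, ∑ ν, ∑ σ, G μ ν σ • (R σ * F ν * F μ))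
        + (-(1/2:ℝ)) • (∑ μ, ∑ ν, ∑ σ, G μ ν σ • (R ν * R σ * F μ)) := by
    rw [Finset.smul_sum, Finset.smul_sum, Finset.smul_sum,
      ← Finset.sum_add_distrib, ← Finset.sum_add_distrib]
    refine Finset.sum_congr rfl fun μ _ => ?_
    rw [hΔB]
    simp only [add_mul, sub_mul, neg_mul, smul_mul_assoc, Finset.sum_mul,
      neg_smul, smul_neg, Finset.smul_sum, Finset.sum_neg_distrib, neg_neg,
      sub_eq_add_neg]
  rw [hexp]
  have hGcyc : (fun a b c => G c a b) = G := by
    funext a b c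
    rw [hG12 c a b, hG23 a c b, neg_neg]
  have hGrev : (fun a b c => G c b a) = (fun a b c => -G a b c) := by
    funext a b c
    rw [hG12 c b a, hG23 b c a, hG12 b a c]; ring
  have hT1 : ∑ μ, ∑ ν, ∑ σ, G μ ν σ • (F ν * F σ * F μ) = S3 G F F F := by
    rw [sum3_rot (f := fun μ ν σ => G μ ν σ • (F ν * F σ * F μ))]
    show S3 (fun a b c => G c a b) F F F = S3 G F F F
    rw [hGcyc]
  have hT2 : ∑ μ, ∑ ν, ∑ σ, G μ ν σ • (R σ * F ν * F μ) = - S3 G R F F := by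
    rw [sum3_rev (f := fun μ ν σ => G μ ν σ • (R σ * F ν * F μ))]
    show S3 (fun a b c => G c b a) R F F = - S3 G R F F
    rw [hGrev, S3_neg]
  have hT3 : ∑ μ, ∑ ν, ∑ σ, G μ ν σ • (R ν * R σ * F μ) = S3 G R R F := by
    rw [sum3_rot (f := fun μ ν σ => G μ ν σ • (R ν * R σ * F μ))]
    show S3 (fun a b c => G c a b) R R F = S3 G R R F
    rw [hGcyc]
  rw [hT1, hT2, hT3]
  have hsplit1 : ∀ y z : τ → A, S3 G F y z = S3 G X y z - S3 G R y z := by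
    intro y z; rw [hFeq]; exact S3_sub1 G X R y z
  have hsplit2 : ∀ x z : τ → A, S3 G x F z = S3 G x X z - S3 G x R z := by
    intro x z; rw [hFeq]; exact S3_sub2 G x X R z
  have hsplit3 : ∀ x y : τ → A, S3 G x y F = S3 G x y X - S3 G x y R := by
    intro x y; rw [hFeq]; exact S3_sub3 G x y X R
  simp only [hsplit1, hsplit2, hsplit3]
  have cXRX : S3 G X R X = S3 G X X R :=
    S3_swap23 G X R X hG23 hRX
  have cRXX : S3 G R X X = S3 G X X R := by
    rw [S3_swap12 G R X X hG12 hRX, cXRX]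
  have cRXR : S3 G R X R = S3 G X R R :=
    S3_swap12 G R X R hG12 hRX
  have cRRX : S3 G R R X = S3 G X R R := by
    rw [S3_swap23 G R R X hG23 hRX, cRXR]
  rw [cXRX, cRXX, cRXR, cRRX]
  module

private lemma anticomm_single_sum {ι : Type*} [Fintype ι] (x : A)
    (k : ι → ℝ) (v : ι → A) (h : ∀ i, x * v i = -(v i * x)) :
    x * (∑ i, k i • v i) = -((∑ i, k i • v i) * x) := by
  simp only [Finset.mul_sum, Finset.sum_mul, mul_smul_comm, smul_mul_assoc,
    h, smul_neg, Finset.sum_neg_distrib]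

private lemma anticomm_lin {ι κ : Type*} [Fintype ι] [Fintype κ]
    (k : ι → ℝ) (l : κ → ℝ) (v : ι → A) (w : κ → A)
    (h : ∀ i j, v i * w j = -(w j * v i)) :
    (∑ i, k i • v i) * (∑ j, l j • w j)
      = -((∑ j, l j • w j) * (∑ i, k i • v i)) := by
  simp only [Finset.sum_mul, Finset.mul_sum, smul_mul_assoc, mul_smul_comm,
    h, smul_neg, Finset.sum_neg_distrib, Finset.smul_sum, smul_smul]
  congr 1
  rw [Finset.sum_comm]
  exact Finset.sum_congr rfl fun i _ => Finset.sum_congr rfl fun j _ => by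
    rw [mul_comm]

private lemma Lag_diff {m n : ℕ} (η : Fin n → Fin n → ℝ)
    (ρ : Fin n → Fin m → ℝ) (C ΔC : Fin n → Fin n → Fin n → ℝ)
    (dX : Fin m → A) (Af dA : Fin n → A) (B u v w : Fin m → A) :
    Lag η ρ (fun a b c => C a b c + ΔC a b c) dX Af dA
        (fun μ => B μ - u μ + v μ - w μ)
      - Lag η ρ C dX Af dA B
    = (∑ μ, -((-u μ + v μ - w μ) * dX μ))
        + (∑ a, ∑ μ, ρ a μ • ((-u μ + v μ - w μ) * Af a))
        + (1/6:ℝ) • (∑ a, ∑ b, ∑ c, ΔC a b c • (Af a * Af b * Af c)) := by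
  simp only [Lag, sub_mul, add_mul, neg_mul, add_smul, smul_sub, smul_add,
    smul_neg, neg_sub, neg_add, neg_neg, Finset.sum_add_distrib,
    Finset.sum_sub_distrib, Finset.sum_neg_distrib, sub_eq_add_neg]
  abel

end Aux15

section Aux16
variable {A : Type*} [Ring A] [Algebra ℝ A]

/-- `R^μ = ρ_a{}^μ A^a`. -/
noncomputable def Rv {m n : ℕ} (ρ : Fin n → Fin m → ℝ) (Af : Fin n → A) :
    Fin m → A := fun μ => ∑ a, ρ a μ • Af a

/-- `F^μ = dX^μ - ρ_a{}^μ A^a`. -/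
noncomputable def Fv {m n : ℕ} (ρ : Fin n → Fin m → ℝ) (dX : Fin m → A)
    (Af : Fin n → A) : Fin m → A := fun μ => dX μ - Rv ρ Af μ

end Aux16

/-- if the 4-form of the twisted Courant sigma model is exact,
`H = dG`, then the Wess–Zumino term (which by Stokes' theorem equals the
pullback 3-form `X^*G = (1/3!) G_{μνσ} dX^μ dX^ν dX^σ`) is absorbed by the
field redefinitions
`B̃_μ = B_μ - (1/3!) G_{μνσ} F^ν F^σ + ½ G_{μνσ} ρ_a{}^σ A^a F^ν
        - ½ G_{μνσ} ρ_a{}^ν ρ_b{}^σ A^a A^b`,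
`C̃_{abc} = C_{abc} + ρ_a{}^μ ρ_b{}^ν ρ_c{}^σ G_{μνσ}`:
it equals the difference of the untwisted Courant sigma model Lagrangians
with the redefined and the original fields, where `F^μ = dX^μ - ρ_a{}^μ A^a`.
(The identity is stated pointwise on the worldvolume, at the level of
differential forms; the coefficients `ρ, C, G, η` are the values of the
target space data composed with `X`, and the forms `dX^μ, A^a` (odd) and
`B_μ, dA^a` (even) live in a graded-commutative algebra `A`.) -/
theorem exact_fourForm_twist_is_field_redefinition
    {m n : ℕ} {A : Type*} [Ring A] [Algebra ℝ A]
    (η : Fin n → Fin n → ℝ) (ρ : Fin n → Fin m → ℝ)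
    (C : Fin n → Fin n → Fin n → ℝ) (G : Fin m → Fin m → Fin m → ℝ)
    (hηsymm : ∀ a b, η a b = η b a)
    (hCanti12 : ∀ a b c, C a b c = - C b a c)
    (hCanti23 : ∀ a b c, C a b c = - C a c b)
    (hGanti12 : ∀ μ ν σ, G μ ν σ = - G ν μ σ)
    (hGanti23 : ∀ μ ν σ, G μ ν σ = - G μ σ ν)
    (dX : Fin m → A) (Af : Fin n → A) (B : Fin m → A) (dA : Fin n → A)
    -- graded commutativity: `dX^μ`, `A^a` are odd; `B_μ`, `dA^a` are even
    (hdXdX : ∀ μ ν, dX μ * dX ν = -(dX ν * dX μ))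
    (hdXA : ∀ μ a, dX μ * Af a = -(Af a * dX μ))
    (hAA : ∀ a b, Af a * Af b = -(Af b * Af a))
    (hB_comm : ∀ (μ : Fin m) (z : A), B μ * z = z * B μ)
    (hdA_comm : ∀ (a : Fin n) (z : A), dA a * z = z * dA a) :
    (1/6 : ℝ) • (∑ μ, ∑ ν, ∑ σ, (G μ ν σ) • (dX μ * dX ν * dX σ))
      = Lag η ρ
          (fun a b c => C a b c
            + ∑ μ, ∑ ν, ∑ σ, ρ a μ * ρ b ν * ρ c σ * G μ ν σ)
          dX Af dA
          (fun μ => B μ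
            - (1/6 : ℝ) • (∑ ν, ∑ σ, (G μ ν σ) •
                ((dX ν - ∑ a, (ρ a ν) • Af a) * (dX σ - ∑ a, (ρ a σ) • Af a)))
            + (1/2 : ℝ) • (∑ ν, ∑ σ, ∑ a, (G μ ν σ * ρ a σ) •
                (Af a * (dX ν - ∑ b, (ρ b ν) • Af b)))
            - (1/2 : ℝ) • (∑ ν, ∑ σ, ∑ a, ∑ b,
                (G μ ν σ * ρ a ν * ρ b σ) • (Af a * Af b)))
        - Lag η ρ C dX Af dA B := by
  have hXR : ∀ μ ν, dX μ * Rv ρ Af ν = -(Rv ρ Af ν * dX μ) := fun μ ν =>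
    anticomm_single_sum (dX μ) (fun a => ρ a ν) Af (fun a => hdXA μ a)
  have hRR : ∀ μ ν, Rv ρ Af μ * Rv ρ Af ν = -(Rv ρ Af ν * Rv ρ Af μ) :=
    fun μ ν => anticomm_lin (fun a => ρ a μ) (fun b => ρ b ν) Af Af hAA
  have key := main_core G hGanti12 hGanti23 dX (Rv ρ Af) (Fv ρ dX Af)
    (fun _ => rfl) hdXdX hXR hRR
  have e2 : ∀ (μ ν σ : Fin m),
      (∑ a, (G μ ν σ * ρ a σ) • (Af a * Fv ρ dX Af ν))
        = G μ ν σ • (Rv ρ Af σ * Fv ρ dX Af ν) := by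
    intro μ ν σ
    show _ = G μ ν σ • ((∑ a, ρ a σ • Af a) * Fv ρ dX Af ν)
    simp [Finset.sum_mul, smul_mul_assoc, Finset.smul_sum, smul_smul]
  have eP : ∀ (μ ν : Fin m), Rv ρ Af μ * Rv ρ Af ν
      = ∑ a, ∑ b, (ρ a μ * ρ b ν) • (Af a * Af b) := by
    intro μ ν
    show (∑ a, ρ a μ • Af a) * (∑ b, ρ b ν • Af b) = _
    rw [Finset.sum_mul]
    refine Finset.sum_congr rfl fun a _ => ?_
    rw [smul_mul_assoc, Finset.mul_sum, Finset.smul_sum]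
    refine Finset.sum_congr rfl fun b _ => ?_
    rw [mul_smul_comm, smul_smul]
  have e3 : ∀ (μ ν σ : Fin m),
      (∑ a, ∑ b, (G μ ν σ * ρ a ν * ρ b σ) • (Af a * Af b))
        = G μ ν σ • (Rv ρ Af ν * Rv ρ Af σ) := by
    intro μ ν σ
    rw [eP ν σ, Finset.smul_sum]
    refine Finset.sum_congr rfl fun a _ => ?_
    rw [Finset.smul_sum]
    refine Finset.sum_congr rfl fun b _ => ?_
    rw [smul_smul]
    congr 1
    ring
  have hRRR : ∀ μ ν σ : Fin m,
      G μ ν σ • (Rv ρ Af μ * Rv ρ Af ν * Rv ρ Af σ)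
        = ∑ a, ∑ b, ∑ c,
            (ρ a μ * ρ b ν * ρ c σ * G μ ν σ) • (Af a * Af b * Af c) := by
    intro μ ν σ
    rw [show Rv ρ Af μ * Rv ρ Af ν * Rv ρ Af σ
        = (∑ a, ∑ b, (ρ a μ * ρ b ν) • (Af a * Af b)) * (∑ c, ρ c σ • Af c)
      from by rw [eP μ ν]; rfl]
    rw [Finset.sum_mul, Finset.smul_sum]
    refine Finset.sum_congr rfl fun a _ => ?_
    rw [Finset.sum_mul, Finset.smul_sum]
    refine Finset.sum_congr rfl fun b _ => ?_
    rw [smul_mul_assoc, Finset.mul_sum, Finset.smul_sum, Finset.smul_sum]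
    refine Finset.sum_congr rfl fun c _ => ?_
    rw [mul_smul_comm, smul_smul, smul_smul]
    congr 1
    ring
  have eC : (∑ a, ∑ b, ∑ c,
        (∑ μ, ∑ ν, ∑ σ, ρ a μ * ρ b ν * ρ c σ * G μ ν σ)
          • (Af a * Af b * Af c))
      = S3 G (Rv ρ Af) (Rv ρ Af) (Rv ρ Af) := by
    calc (∑ a, ∑ b, ∑ c,
            (∑ μ, ∑ ν, ∑ σ, ρ a μ * ρ b ν * ρ c σ * G μ ν σ)
              • (Af a * Af b * Af c))
        = ∑ a, ∑ b, ∑ c, ∑ μ, ∑ ν, ∑ σ,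
            (ρ a μ * ρ b ν * ρ c σ * G μ ν σ) • (Af a * Af b * Af c) := by
          simp only [Finset.sum_smul]
      _ = ∑ μ, ∑ ν, ∑ σ, ∑ a, ∑ b, ∑ c,
            (ρ a μ * ρ b ν * ρ c σ * G μ ν σ) • (Af a * Af b * Af c) :=
          sum_swap33 _
      _ = S3 G (Rv ρ Af) (Rv ρ Af) (Rv ρ Af) := by
          show _ = ∑ μ, ∑ ν, ∑ σ,
            G μ ν σ • (Rv ρ Af μ * Rv ρ Af ν * Rv ρ Af σ)
          exact Finset.sum_congr rfl fun μ _ => Finset.sum_congr rfl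
            fun ν _ => Finset.sum_congr rfl fun σ _ => (hRRR μ ν σ).symm
  have hd : Lag η ρ
        (fun a b c => C a b c
          + ∑ μ, ∑ ν, ∑ σ, ρ a μ * ρ b ν * ρ c σ * G μ ν σ)
        dX Af dA
        (fun μ => B μ
          - (1/6 : ℝ) • (∑ ν, ∑ σ, (G μ ν σ) •
              ((dX ν - ∑ a, (ρ a ν) • Af a) * (dX σ - ∑ a, (ρ a σ) • Af a)))
          + (1/2 : ℝ) • (∑ ν, ∑ σ, ∑ a, (G μ ν σ * ρ a σ) •
              (Af a * (dX ν - ∑ b, (ρ b ν) • Af b)))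
          - (1/2 : ℝ) • (∑ ν, ∑ σ, ∑ a, ∑ b,
              (G μ ν σ * ρ a ν * ρ b σ) • (Af a * Af b)))
      - Lag η ρ C dX Af dA B
    = (∑ μ, -((-( (1/6:ℝ) • (∑ ν, ∑ σ, G μ ν σ • (Fv ρ dX Af ν * Fv ρ dX Af σ)))
          + (1/2:ℝ) • (∑ ν, ∑ σ, ∑ a, (G μ ν σ * ρ a σ) • (Af a * Fv ρ dX Af ν))
          - (1/2:ℝ) • (∑ ν, ∑ σ, ∑ a, ∑ b,
              (G μ ν σ * ρ a ν * ρ b σ) • (Af a * Af b))) * dX μ))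
      + (∑ a, ∑ μ, ρ a μ •
          ((-( (1/6:ℝ) • (∑ ν, ∑ σ, G μ ν σ • (Fv ρ dX Af ν * Fv ρ dX Af σ)))
          + (1/2:ℝ) • (∑ ν, ∑ σ, ∑ a, (G μ ν σ * ρ a σ) • (Af a * Fv ρ dX Af ν))
          - (1/2:ℝ) • (∑ ν, ∑ σ, ∑ a, ∑ b,
              (G μ ν σ * ρ a ν * ρ b σ) • (Af a * Af b))) * Af a))
      + (1/6:ℝ) • (∑ a, ∑ b, ∑ c,
          (∑ μ, ∑ ν, ∑ σ, ρ a μ * ρ b ν * ρ c σ * G μ ν σ)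
            • (Af a * Af b * Af c)) :=
    Lag_diff η ρ C _ dX Af dA B _ _ _
  rw [hd]
  simp only [e2, e3]
  have hmid : (∑ a, ∑ μ, ρ a μ •
        ((-( (1/6:ℝ) • (∑ ν, ∑ σ, G μ ν σ • (Fv ρ dX Af ν * Fv ρ dX Af σ)))
          + (1/2:ℝ) • (∑ ν, ∑ σ, G μ ν σ • (Rv ρ Af σ * Fv ρ dX Af ν))
          - (1/2:ℝ) • (∑ ν, ∑ σ, G μ ν σ • (Rv ρ Af ν * Rv ρ Af σ))) * Af a))
      = ∑ μ, ((-( (1/6:ℝ) • (∑ ν, ∑ σ, G μ ν σ • (Fv ρ dX Af ν * Fv ρ dX Af σ)))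
          + (1/2:ℝ) • (∑ ν, ∑ σ, G μ ν σ • (Rv ρ Af σ * Fv ρ dX Af ν))
          - (1/2:ℝ) • (∑ ν, ∑ σ, G μ ν σ • (Rv ρ Af ν * Rv ρ Af σ)))
            * Rv ρ Af μ) := by
    rw [Finset.sum_comm]
    refine Finset.sum_congr rfl fun μ _ => ?_
    rw [show (Rv ρ Af μ : A) = ∑ a, ρ a μ • Af a from rfl]
    simp [Finset.mul_sum, mul_smul_comm]
  rw [hmid, eC]
  exact key
end
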